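/- Suppose N ≤ D and the potential V^a: R^d → R is twice differentiable with −M₂ I_d ≼ ∇²V^a(q) ≼ M₂ I_d for all q. Define 𝒱(ξ) = β_D Σ_{j=0}^{D-1} V^a(x_N(jβ_D)) for ξ ∈ R^{dN} and the block matrix Σ ∈ R^{dN×dN} with blocks Σ_{kl} = (ω_k²+a)^{-1/2}(ω_l²+a)^{-1/2} ∇²_{ξ_k ξ_l} 𝒱(ξ). Then −(M₂/a) I_{dN} ≼ Σ ≼ (M₂/a) I_{dN}. -/

import Mathlib

/-!
With `w_k = (ω_k² + a)^{-1/2} q_k`, the chain rule writes the quadratic form of `Σ` at `q` as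
`β_D Σ_j ∇²V^a(x_N(jβ_D))[y_j, y_j]` with `y_j = Σ_k c_k(jβ_D) w_k`, which is at most
`M₂ β_D Σ_j |y_j|²` in absolute value. Sums of roots of unity show that on the grid the modes
`c_k`, `k < N ≤ D`, are orthogonal with `β_D Σ_j c_k(jβ_D)² ≤ 1`, so this is at most
`M₂ Σ_k |w_k|² ≤ (M₂ / a) Σ_k |q_k|²`.
-/
open Real

noncomputable section

/-- Real Fourier basis functions on `[0, β]`. -/
def fb (β : ℝ) (k : ℕ) (τ : ℝ) : ℝ :=
  if k = 0 then Real.sqrt (1 / β)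
  else if k % 2 = 1 then Real.sqrt (2 / β) * Real.sin (2 * (((k + 1) / 2 : ℕ) : ℝ) * Real.pi * τ / β)
  else Real.sqrt (2 / β) * Real.cos (2 * ((k / 2 : ℕ) : ℝ) * Real.pi * τ / β)

/-- Matsubara frequencies: `ω_0 = 0`, `ω_{2k-1} = ω_{2k} = 2kπ/β`. -/
def om (β : ℝ) (k : ℕ) : ℝ := 2 * (((k + 1) / 2 : ℕ) : ℝ) * Real.pi / β

open Finset

theorem sum_range_exp_two_pi_mul_div (D : ℕ) (n : ℤ) :
    ∑ j ∈ range D, Complex.exp ((2 * π * n * j / D : ℝ) * Complex.I)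
      = if (D : ℤ) ∣ n then (D : ℂ) else 0 := by
  rcases D.eq_zero_or_pos with rfl | hD
  · simp
  have hζ := Complex.isPrimitiveRoot_exp D hD.ne'
  have hterm : ∀ j : ℕ, Complex.exp ((2 * π * n * j / D : ℝ) * Complex.I)
      = (Complex.exp (2 * π * Complex.I / D) ^ n) ^ j := by
    intro j
    rw [← zpow_natCast, ← zpow_mul, ← Complex.exp_int_mul]
    push_cast
    ring_nf
  generalize Complex.exp (2 * π * Complex.I / D) = ζ at hζ hterm
  simp only [hterm]
  split_ifs with hn
  · simp [(hζ.zpow_eq_one_iff_dvd n).mpr hn]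
  · have hz : (ζ ^ n) ^ D = 1 := by
      rw [← zpow_natCast, ← zpow_mul, mul_comm, zpow_mul, zpow_natCast, hζ.pow_eq_one, one_zpow]
    rw [geom_sum_eq (mt (hζ.zpow_eq_one_iff_dvd n).mp hn), hz, sub_self, zero_div]

theorem sum_range_cos_two_pi_mul_div_sub (D : ℕ) (n : ℤ) (θ : ℝ) :
    ∑ j ∈ range D, cos (2 * π * n * j / D - θ) = if (D : ℤ) ∣ n then D * cos θ else 0 := by
  have hsum := sum_range_exp_two_pi_mul_div D n
  have hcos := congrArg Complex.re hsum
  have hsin := congrArg Complex.im hsum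
  simp only [Complex.re_sum, Complex.im_sum, Complex.exp_ofReal_mul_I_re,
    Complex.exp_ofReal_mul_I_im] at hcos hsin
  simp only [cos_sub, sum_add_distrib, ← sum_mul, hcos, hsin]
  split_ifs <;> simp

theorem sum_range_cos_mul_cos (D m m' : ℕ) (φ ψ : ℝ) :
    ∑ j ∈ range D, cos (2 * π * m * j / D - φ) * cos (2 * π * m' * j / D - ψ)
      = ((if (D : ℤ) ∣ ((m : ℤ) - m') then D * cos (φ - ψ) else 0)
        + (if (D : ℤ) ∣ ((m : ℤ) + m') then D * cos (φ + ψ) else 0)) / 2 := by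
  rw [← sum_range_cos_two_pi_mul_div_sub, ← sum_range_cos_two_pi_mul_div_sub, ← sum_add_distrib,
    sum_div]
  refine sum_congr rfl fun j _ => ?_
  rw [eq_div_iff two_ne_zero, mul_comm, ← mul_assoc, two_mul_cos_mul_cos]
  push_cast
  ring_nf

-- `fb β k` as the cosine `fbAmp β k * cos (2π fbFreq k τ / β - fbPhase k)`: the sine modes are
-- cosines shifted by `π / 2`.
def fbFreq (k : ℕ) : ℕ := (k + 1) / 2

def fbAmp (β : ℝ) (k : ℕ) : ℝ := if k = 0 then √(1 / β) else √(2 / β)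

def fbPhase (k : ℕ) : ℝ := if k % 2 = 1 then π / 2 else 0

theorem fb_natCast_mul_div {β : ℝ} (hβ : β ≠ 0) (D k j : ℕ) :
    fb β k (j * (β / D)) = fbAmp β k * cos (2 * π * fbFreq k * j / D - fbPhase k) := by
  have harg : ∀ m : ℕ, 2 * (m : ℝ) * π * (j * (β / D)) / β = 2 * π * m * j / D := by
    intro m
    field_simp
  rcases eq_or_ne k 0 with rfl | h0
  · simp [fb, fbAmp, fbFreq, fbPhase]
  · simp only [fb, fbAmp, fbFreq, fbPhase, if_neg h0]
    split_ifs
    · rw [harg, cos_sub_pi_div_two]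
    · rw [harg, sub_zero, show k / 2 = (k + 1) / 2 by omega]

theorem sum_fb_mul_fb {β : ℝ} (hβ : β ≠ 0) (D k l : ℕ) :
    ∑ j : Fin D, fb β k (j * (β / D)) * fb β l (j * (β / D)) =
      fbAmp β k * fbAmp β l *
        (((if (D : ℤ) ∣ ((fbFreq k : ℤ) - fbFreq l) then D * cos (fbPhase k - fbPhase l) else 0)
          + (if (D : ℤ) ∣ ((fbFreq k : ℤ) + fbFreq l) then D * cos (fbPhase k + fbPhase l)
              else 0)) / 2) := by
  rw [Fin.sum_univ_eq_sum_range (fun j => fb β k (j * (β / D)) * fb β l (j * (β / D))),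
    ← sum_range_cos_mul_cos, mul_sum]
  refine sum_congr rfl fun j _ => ?_
  rw [fb_natCast_mul_div hβ, fb_natCast_mul_div hβ]
  ring

theorem sum_fb_mul_fb_eq_zero {β : ℝ} (hβ : β ≠ 0) {D k l : ℕ} (hk : k < D) (hl : l < D)
    (hkl : k ≠ l) : ∑ j : Fin D, fb β k (j * (β / D)) * fb β l (j * (β / D)) = 0 := by
  have hsum : ¬ (D : ℤ) ∣ ((fbFreq k : ℤ) + fbFreq l) := fun h => by
    have := Int.eq_zero_of_abs_lt_dvd h (by rw [abs_lt]; unfold fbFreq; omega)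
    unfold fbFreq at this
    omega
  have hdiff : (if (D : ℤ) ∣ ((fbFreq k : ℤ) - fbFreq l) then D * cos (fbPhase k - fbPhase l)
      else 0) = 0 := by
    split_ifs with h
    -- equal frequencies below `D` only for a sine and a cosine mode, whose phases differ by `π / 2`
    · have := Int.eq_zero_of_abs_lt_dvd h (by rw [abs_lt]; unfold fbFreq; omega)
      unfold fbFreq at this
      unfold fbPhase
      split_ifs <;> first | omega | simp
    · rfl
  rw [sum_fb_mul_fb hβ, hdiff, if_neg hsum]
  simp

theorem mul_sum_fb_mul_self_le_one {β : ℝ} (hβ : 0 < β) {D k : ℕ} (hk : k < D) :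
    β / D * ∑ j : Fin D, fb β k (j * (β / D)) * fb β k (j * (β / D)) ≤ 1 := by
  have hD : (0 : ℝ) < D := by exact_mod_cast k.zero_le.trans_lt hk
  rw [sum_fb_mul_fb hβ.ne', sub_self, if_pos (dvd_zero _), sub_self, cos_zero, mul_one]
  rcases eq_or_ne k 0 with rfl | hk0
  · have hA : fbAmp β 0 * fbAmp β 0 = 1 / β := mul_self_sqrt (by positivity)
    norm_num [hA, fbFreq, fbPhase]
    exact (by field_simp : β / D * (β⁻¹ * D) = 1).le
  -- only an inequality: the sine mode with `2 * fbFreq k = D` vanishes on the grid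
  · have hS : (if (D : ℤ) ∣ ((fbFreq k : ℤ) + fbFreq k) then D * cos (fbPhase k + fbPhase k)
        else 0) ≤ 0 := by
      split_ifs with h
      · unfold fbPhase
        split_ifs with hodd
        · simp [hD.le]
        · have := Int.eq_zero_of_abs_lt_dvd h (by rw [abs_lt]; unfold fbFreq; omega)
          unfold fbFreq at this
          omega
      · rfl
    have hA : fbAmp β k * fbAmp β k = 2 / β := by
      simp only [fbAmp, if_neg hk0]
      exact mul_self_sqrt (by positivity)
    generalize (if (D : ℤ) ∣ ((fbFreq k : ℤ) + fbFreq k) then D * cos (fbPhase k + fbPhase k)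
        else (0 : ℝ)) = S at hS ⊢
    rw [hA]
    calc β / D * (2 / β * ((D + S) / 2)) = (D + S) / D := by field_simp
      _ ≤ 1 := by rw [div_le_one hD]; linarith

section Hessian

variable {E F : Type*} [NormedAddCommGroup E] [NormedSpace ℝ E] [NormedAddCommGroup F]
  [NormedSpace ℝ F] {κ : Type*} [Fintype κ] {V : F → ℝ}

theorem iteratedFDeriv_two_mul_sum_comp_apply (hV : ContDiff ℝ 2 V) (c : ℝ) (L : κ → E →L[ℝ] F)
    (ξ w : E) :
    iteratedFDeriv ℝ 2 (fun ζ => c * ∑ j, V (L j ζ)) ξ ![w, w]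
      = c * ∑ j, iteratedFDeriv ℝ 2 V (L j ξ) ![L j w, L j w] := by
  have hVL : ∀ j, ContDiff ℝ 2 (fun ζ => V (L j ζ)) := fun j => hV.comp (L j).contDiff
  have hcomp : ∀ j, iteratedFDeriv ℝ 2 (fun ζ => V (L j ζ)) ξ ![w, w]
      = iteratedFDeriv ℝ 2 V (L j ξ) ![L j w, L j w] := by
    intro j
    rw [show (fun ζ => V (L j ζ)) = V ∘ L j from rfl, (L j).iteratedFDeriv_comp_right hV ξ le_rfl,
      ContinuousMultilinearMap.compContinuousLinearMap_apply]
    congr 1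
    ext i
    fin_cases i <;> rfl
  change iteratedFDeriv ℝ 2 (fun ζ => c • ∑ j, V (L j ζ)) ξ ![w, w] = _
  rw [iteratedFDeriv_const_smul_apply' (ContDiff.sum fun j _ => hVL j).contDiffAt,
    iteratedFDeriv_fun_sum_apply fun j _ => (hVL j).contDiffAt]
  simp only [smul_apply, _root_.sum_apply, hcomp, smul_eq_mul]

theorem abs_iteratedFDeriv_two_mul_sum_comp_le {ι : Type*} [Fintype ι] {M : ℝ}
    (hV : ContDiff ℝ 2 V) (hH : ∀ x v, |iteratedFDeriv ℝ 2 V x ![v, v]| ≤ M * ‖v‖ ^ 2)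
    (c : ℝ) (u : ι → κ → ℝ) (ξ w : ι → F) :
    |iteratedFDeriv ℝ 2 (fun ζ : ι → F => c * ∑ j, V (∑ k, u k j • ζ k)) ξ ![w, w]|
      ≤ |c| * (M * ∑ j, ‖∑ k, u k j • w k‖ ^ 2) := by
  let L : κ → (ι → F) →L[ℝ] F := fun j => ∑ k, u k j • ContinuousLinearMap.proj k
  have hL : ∀ j ζ, L j ζ = ∑ k, u k j • ζ k := fun j ζ => by simp [L]
  simp only [← hL]
  rw [iteratedFDeriv_two_mul_sum_comp_apply hV, abs_mul, mul_sum]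
  gcongr
  exact (abs_sum_le_sum_abs _ _).trans (sum_le_sum fun j _ => hH _ _)

end Hessian

theorem mul_sum_norm_sq_sum_smul_le {E : Type*} [NormedAddCommGroup E] [InnerProductSpace ℝ E]
    {ι κ : Type*} [Fintype ι] [Fintype κ] (r : ℝ) (u : ι → κ → ℝ)
    (horth : ∀ k l, k ≠ l → ∑ j, u k j * u l j = 0) (hdiag : ∀ k, r * ∑ j, u k j * u k j ≤ 1)
    (w : ι → E) :
    r * ∑ j, ‖∑ k, u k j • w k‖ ^ 2 ≤ ∑ k, ‖w k‖ ^ 2 := by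
  have hexpand : r * ∑ j, ‖∑ k, u k j • w k‖ ^ 2
      = ∑ k, ∑ l, (r * ∑ j, u k j * u l j) * inner ℝ (w k) (w l) := by
    simp only [← real_inner_self_eq_norm_sq, sum_inner, inner_sum, real_inner_smul_left,
      real_inner_smul_right, mul_sum, sum_mul]
    rw [sum_comm]
    refine sum_congr rfl fun k _ => ?_
    rw [sum_comm]
    refine sum_congr rfl fun l _ => sum_congr rfl fun j _ => by rw [real_inner_comm]; ring
  rw [hexpand]
  refine sum_le_sum fun k _ => ?_
  rw [sum_eq_single k (fun l _ hlk => by rw [horth k l hlk.symm, mul_zero, zero_mul])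
    (fun h => absurd (mem_univ k) h), real_inner_self_eq_norm_sq]
  exact mul_le_of_le_one_left (sq_nonneg _) (hdiag k)

theorem norm_inv_sqrt_sq_add_smul_sq_le {E : Type*} [NormedAddCommGroup E] [NormedSpace ℝ E]
    {a : ℝ} (ha : 0 < a) (ω : ℝ) (v : E) : ‖(√(ω ^ 2 + a))⁻¹ • v‖ ^ 2 ≤ ‖v‖ ^ 2 / a := by
  rw [norm_smul, mul_pow, norm_inv, norm_of_nonneg (sqrt_nonneg _), inv_pow,
    sq_sqrt (by positivity), inv_mul_eq_div]
  gcongr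
  linarith [sq_nonneg ω]

theorem weighted_hessian_bound_general
    (d N D : ℕ) (hND : N ≤ D) (β a M₂ : ℝ)
    (hβ : 0 < β) (ha : 0 < a) (hM : 0 ≤ M₂)
    (Va : EuclideanSpace ℝ (Fin d) → ℝ)
    (hVa_smooth : ContDiff ℝ 2 Va)
    (hHess : ∀ q v : EuclideanSpace ℝ (Fin d),
      |iteratedFDeriv ℝ 2 Va q ![v, v]| ≤ M₂ * ‖v‖ ^ 2) :
    ∀ (ξ q : Fin N → EuclideanSpace ℝ (Fin d)),
      |iteratedFDeriv ℝ 2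
          (fun ζ : Fin N → EuclideanSpace ℝ (Fin d) =>
            (β / D) * ∑ j : Fin D, Va (∑ k : Fin N, fb β (k : ℕ) ((j : ℕ) * (β / D)) • ζ k)) ξ
          ![fun k => (Real.sqrt ((om β (k : ℕ)) ^ 2 + a))⁻¹ • q k,
            fun k => (Real.sqrt ((om β (k : ℕ)) ^ 2 + a))⁻¹ • q k]|
        ≤ (M₂ / a) * ∑ k : Fin N, ‖q k‖ ^ 2 := by
  intro ξ q
  set w : Fin N → EuclideanSpace ℝ (Fin d) := fun k => (√(om β k ^ 2 + a))⁻¹ • q k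
  have hgram : β / D * ∑ j : Fin D, ‖∑ k : Fin N, fb β k (j * (β / D)) • w k‖ ^ 2
      ≤ ∑ k, ‖w k‖ ^ 2 :=
    mul_sum_norm_sq_sum_smul_le _ _
      (fun k l hkl => sum_fb_mul_fb_eq_zero hβ.ne' (k.2.trans_le hND) (l.2.trans_le hND)
        (Fin.val_ne_of_ne hkl))
      (fun k => mul_sum_fb_mul_self_le_one hβ (k.2.trans_le hND)) w
  calc _ ≤ |β / D| * (M₂ * ∑ j : Fin D, ‖∑ k : Fin N, fb β k (j * (β / D)) • w k‖ ^ 2) :=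
        abs_iteratedFDeriv_two_mul_sum_comp_le hVa_smooth hHess _ _ ξ w
    _ = M₂ * (β / D * ∑ j : Fin D, ‖∑ k : Fin N, fb β k (j * (β / D)) • w k‖ ^ 2) := by
        rw [abs_of_nonneg (by positivity)]
        ring
    _ ≤ M₂ * ∑ k, ‖q k‖ ^ 2 / a := by
        gcongr
        exact hgram.trans (sum_le_sum fun k _ => norm_inv_sqrt_sq_add_smul_sq_le ha _ _)
    _ = M₂ / a * ∑ k, ‖q k‖ ^ 2 := by
        rw [← sum_div]
        ring

/-- If `N ≤ D` and `−M₂ I ≼ ∇²V^a ≼ M₂ I`, then the frequency-weighted Hessian of the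
discretized loop potential `𝒱(ξ) = β_D Σ_j V^a(x_N(jβ_D))` is bounded by `M₂/a` as a
quadratic form: for any `ξ` and any `q ∈ ℝ^{dN}`, writing `w_k = (ω_k²+a)^{-1/2} q_k`,
`|⟨w, ∇²𝒱(ξ) w⟩| ≤ (M₂/a) Σ_k |q_k|²`. -/
theorem weighted_hessian_bound
    (d N D : ℕ) (hN : 0 < N) (hND : N ≤ D) (β a M₂ : ℝ)
    (hβ : 0 < β) (ha : 0 < a) (hM : 0 ≤ M₂)
    (Va : EuclideanSpace ℝ (Fin d) → ℝ)
    (hVa_smooth : ContDiff ℝ 2 Va)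
    (hHess : ∀ q v : EuclideanSpace ℝ (Fin d),
      |iteratedFDeriv ℝ 2 Va q ![v, v]| ≤ M₂ * ‖v‖ ^ 2) :
    ∀ (ξ q : Fin N → EuclideanSpace ℝ (Fin d)),
      |iteratedFDeriv ℝ 2
          (fun ζ : Fin N → EuclideanSpace ℝ (Fin d) =>
            (β / D) * ∑ j : Fin D, Va (∑ k : Fin N, fb β (k : ℕ) ((j : ℕ) * (β / D)) • ζ k)) ξ
          ![fun k => (Real.sqrt ((om β (k : ℕ)) ^ 2 + a))⁻¹ • q k,
            fun k => (Real.sqrt ((om β (k : ℕ)) ^ 2 + a))⁻¹ • q k]|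
        ≤ (M₂ / a) * ∑ k : Fin N, ‖q k‖ ^ 2 :=
  weighted_hessian_bound_general d N D hND β a M₂ hβ ha hM Va hVa_smooth hHess
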